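/- arXiv:1210.2198 — 2 statements merged into one kernel-verified Lean document; each statement's English description precedes it below -/
import Mathlib

section
/- Let (ξᵢ, ℱᵢ)_{i=0..n} be martingale differences satisfying conditions (A1) (conditional Bernstein with parameter ε ∈ (0,1/2]) and (A2) (|⟨X⟩_n − 1| ≤ δ², δ ∈ [0,1/2]). Define the drift B_n(λ) = Σᵢ E[ξᵢ e^{λξᵢ} | ℱ_{i−1}] / E[e^{λξᵢ} | ℱ_{i−1}]. Then for each α ∈ (0,1) there is c_α such that for all 0 ≤ λ ≤ α ε^{−1}: |B_n(λ) − λ| ≤ λδ² + c_α λ²ε almost surely. -/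
/-!
Fix `i` and write `aₖ = E[ξᵢᵏ | ℱᵢ₋₁]`, `σ = a₂`. Expanding the exponential, the conditional
expectations in the drift are the power series `Z = ∑ λᵏ aₖ / k!` and `Y = ∑ λᵏ aₖ₊₁ / k!`;
exchanging `E[· | ℱᵢ₋₁]` with the series is legitimate because Bernstein's condition bounds the
absolute moments by `(k+1)! εᵏ` up to a constant, and `λε ≤ α < 1`. Since `a₀ = 1`, `a₁ = 0` and
`|aₖ| ≤ k! εᵏ⁻² σ / 2`, the tails beyond the quadratic terms are geometric in `λε`:
`|Y - λσ| = O(λ²εσ)` and `|Z - 1| = O(λ²σ)`. As `Z ≥ 1` (from `eˣ ≥ 1 + x`) and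
`σ² ≤ a₄ ≤ 12ε²σ` (conditional Jensen), `|Y / Z - λσ| ≤ |Y - λσ| + λσ |Z - 1| = O(λ²εσ)`.
Summing over `i` and using `|∑ σᵢ - 1| ≤ δ²` gives the claim.
-/

open MeasureTheory ProbabilityTheory Filter Finset
open scoped Nat ENNReal

lemma abs_div_sub_le_of_one_le {y z x : ℝ} (hz : 1 ≤ z) :
    |y / z - x| ≤ |y - x| + |x| * |z - 1| := by
  have hz0 : 0 < z := by linarith
  rw [show y / z - x = (y - x * z) / z by field_simp, abs_div, abs_of_pos hz0]
  calc |y - x * z| / z ≤ |y - x * z| := div_le_self (abs_nonneg _) hz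
    _ = |(y - x) - x * (z - 1)| := by ring_nf
    _ ≤ |y - x| + |x| * |z - 1| := (abs_sub _ _).trans_eq (by rw [abs_mul])

lemma abs_tsum_sub_two_le {f g : ℕ → ℝ} {G : ℝ} (hg : HasSum g G)
    (hfg : ∀ k, |f (k + 2)| ≤ g k) : |∑' k, f k - (f 0 + f 1)| ≤ G := by
  have htail : Summable fun k => f (k + 2) := Summable.of_norm_bounded hg.summable hfg
  rw [← ((summable_nat_add_iff 2).mp htail).sum_add_tsum_nat_add 2, sum_range_succ,
    sum_range_one, add_sub_cancel_left]
  exact htail.hasSum.norm_le_of_bounded hg hfg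

lemma abs_pow_two_mul_add_one_le (x : ℝ) (i : ℕ) :
    |x| ^ (2 * i + 1) ≤ (x ^ (2 * i) + x ^ (2 * (i + 1))) / 2 := by
  rw [← Even.pow_abs (even_two_mul i), ← Even.pow_abs (even_two_mul (i + 1)), pow_succ,
    mul_add, pow_add]
  nlinarith [mul_nonneg (pow_nonneg (abs_nonneg x) (2 * i)) (sq_nonneg (|x| - 1))]

lemma summable_pow_div_factorial_mul_of_le {b : ℕ → ℝ} {B ε l : ℝ} (j : ℕ)
    (hb0 : ∀ n, 0 ≤ b n) (hb : ∀ n, b n ≤ B * (n + 1)! * ε ^ n) (hε : 0 ≤ ε) (hl : 0 ≤ l)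
    (hlε : l * ε < 1) : Summable fun k => l ^ k / k ! * b (k + j) := by
  have hr : ‖l * ε‖ < 1 := by rwa [Real.norm_of_nonneg (mul_nonneg hl hε)]
  refine Summable.of_nonneg_of_le (fun k => by have := hb0 (k + j); positivity) (fun k => ?_)
    ((summable_descFactorial_mul_geometric_of_norm_lt_one (j + 1) hr).mul_left (B * ε ^ j))
  have hfac : ((k + j + 1)! : ℝ) = k ! * ((k + (j + 1)).descFactorial (j + 1) : ℕ) := by
    have := Nat.factorial_mul_descFactorial (Nat.le_add_left (j + 1) k)
    rw [Nat.add_sub_cancel, ← add_assoc] at this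
    exact_mod_cast this.symm
  calc l ^ k / k ! * b (k + j) ≤ l ^ k / k ! * (B * (k + j + 1)! * ε ^ (k + j)) := by
        gcongr; exact hb _
    _ = B * ε ^ j * (((k + (j + 1)).descFactorial (j + 1) : ℕ) * (l * ε) ^ k) := by
        rw [hfac]; field_simp; ring

lemma abs_sum_sub_le_of_abs_sub_le {ι : Type*} {s : Finset ι} {b σ : ι → ℝ} {l δ C : ℝ}
    (hl : 0 ≤ l) (hC : 0 ≤ C) (hb : ∀ i ∈ s, |b i - l * σ i| ≤ C * σ i)
    (hσ : |∑ i ∈ s, σ i - 1| ≤ δ ^ 2) (hδ : δ ^ 2 ≤ 1) :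
    |∑ i ∈ s, b i - l| ≤ l * δ ^ 2 + 2 * C := by
  have hV : ∑ i ∈ s, σ i ≤ 2 := by linarith [(abs_le.mp hσ).2]
  have hdev : |∑ i ∈ s, b i - l * ∑ i ∈ s, σ i| ≤ C * ∑ i ∈ s, σ i := by
    rw [mul_sum, mul_sum, ← sum_sub_distrib]
    exact (abs_sum_le_sum_abs _ _).trans (sum_le_sum hb)
  calc |∑ i ∈ s, b i - l|
      = |(∑ i ∈ s, b i - l * ∑ i ∈ s, σ i) + l * (∑ i ∈ s, σ i - 1)| := by ring_nf
    _ ≤ |∑ i ∈ s, b i - l * ∑ i ∈ s, σ i| + l * |∑ i ∈ s, σ i - 1| := by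
        rw [← abs_of_nonneg hl, ← abs_mul, abs_of_nonneg hl]
        exact abs_add_le _ _
    _ ≤ C * 2 + l * δ ^ 2 := by gcongr; exact hdev.trans (by gcongr)
    _ = l * δ ^ 2 + 2 * C := by ring

/-- `T / 2 + 6 / (1 - α)` with `T = ∑ (k + 3) αᵏ`: the first term bounds the tail of the series
for `E[ξ e^{λξ} | ℱ]`, the second the cross term `λσ |E[e^{λξ} | ℱ] - 1|`. -/
noncomputable def driftConst (α : ℝ) : ℝ := (α / (1 - α) ^ 2 + 3 / (1 - α)) / 2 + 6 / (1 - α)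

lemma driftConst_pos {α : ℝ} (hα0 : 0 ≤ α) (hα1 : α < 1) : 0 < driftConst α := by
  have : 0 < 1 - α := by linarith
  unfold driftConst
  positivity

structure BernsteinMoments (a : ℕ → ℝ) (ε σ : ℝ) : Prop where
  zero : a 0 = 1
  one : a 1 = 0
  two : a 2 = σ
  bernstein : ∀ k, 3 ≤ k → |a k| ≤ 1 / 2 * k ! * ε ^ (k - 2) * σ

namespace BernsteinMoments

variable {a : ℕ → ℝ} {ε σ l α : ℝ}

lemma nonneg (h : BernsteinMoments a ε σ) (hε : 0 < ε) : 0 ≤ σ := by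
  have h3 := (abs_nonneg _).trans (h.bernstein 3 le_rfl)
  norm_num [Nat.factorial] at h3
  exact nonneg_of_mul_nonneg_right (by linarith) hε

lemma abs_le (h : BernsteinMoments a ε σ) (hε : 0 < ε) (k : ℕ) :
    |a (k + 2)| ≤ 1 / 2 * (k + 2)! * ε ^ k * σ := by
  rcases k with _ | k
  · simp [h.two, abs_of_nonneg (h.nonneg hε), Nat.factorial]
  · simpa using h.bernstein (k + 3) (by omega)

lemma abs_tsum_sub_one_le (h : BernsteinMoments a ε σ) (hε : 0 < ε) (hl : 0 ≤ l)
    (hlε : l * ε ≤ α) (hα : α < 1) :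
    |∑' k, l ^ k / k ! * a k - 1| ≤ l ^ 2 * σ / 2 * (1 - α)⁻¹ := by
  have hα0 : 0 ≤ α := (mul_nonneg hl hε.le).trans hlε
  have hσ := h.nonneg hε
  have hgeom := (hasSum_geometric_of_lt_one hα0 hα).mul_left (l ^ 2 * σ / 2)
  have key := abs_tsum_sub_two_le (f := fun k => l ^ k / k ! * a k) hgeom fun k => by
    rw [abs_mul, abs_of_nonneg (by positivity)]
    calc l ^ (k + 2) / (k + 2)! * |a (k + 2)|
        ≤ l ^ (k + 2) / (k + 2)! * (1 / 2 * (k + 2)! * ε ^ k * σ) := by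
          gcongr; exact h.abs_le hε k
      _ = l ^ 2 * σ / 2 * (l * ε) ^ k := by field_simp; ring
      _ ≤ l ^ 2 * σ / 2 * α ^ k := by gcongr
  simpa [h.zero, h.one] using key

lemma abs_tsum_succ_sub_le (h : BernsteinMoments a ε σ) (hε : 0 < ε) (hl : 0 ≤ l)
    (hlε : l * ε ≤ α) (hα : α < 1) :
    |∑' k, l ^ k / k ! * a (k + 1) - l * σ| ≤
      l ^ 2 * ε * σ / 2 * (α / (1 - α) ^ 2 + 3 / (1 - α)) := by
  have hα0 : 0 ≤ α := (mul_nonneg hl hε.le).trans hlε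
  have hσ := h.nonneg hε
  have hαn : ‖α‖ < 1 := by rwa [Real.norm_of_nonneg hα0]
  have hser : HasSum (fun k : ℕ => ((k : ℝ) + 3) * α ^ k) (α / (1 - α) ^ 2 + 3 / (1 - α)) := by
    simpa [add_mul, div_eq_mul_inv] using (hasSum_coe_mul_geometric_of_norm_lt_one hαn).add
      ((hasSum_geometric_of_lt_one hα0 hα).mul_left 3)
  have key := abs_tsum_sub_two_le (f := fun k => l ^ k / k ! * a (k + 1))
    (hser.mul_left (l ^ 2 * ε * σ / 2)) fun k => by
    rw [abs_mul, abs_of_nonneg (by positivity)]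
    calc l ^ (k + 2) / (k + 2)! * |a (k + 1 + 2)|
        ≤ l ^ (k + 2) / (k + 2)! * (1 / 2 * (k + 1 + 2)! * ε ^ (k + 1) * σ) := by
          gcongr; exact h.abs_le hε (k + 1)
      _ = l ^ 2 * ε * σ / 2 * (((k : ℝ) + 3) * (l * ε) ^ k) := by
          have hfac : ((k + 1 + 2)! : ℝ) = ((k : ℝ) + 3) * (k + 2)! := by
            rw [show k + 1 + 2 = (k + 2) + 1 from rfl, Nat.factorial_succ]; push_cast; ring
          rw [hfac]
          field_simp
          ring
      _ ≤ l ^ 2 * ε * σ / 2 * (((k : ℝ) + 3) * α ^ k) := by gcongr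
  simpa [h.one, h.two] using key

lemma abs_tsum_div_tsum_sub_le (h : BernsteinMoments a ε σ) (hε : 0 < ε) (hl : 0 ≤ l)
    (hlε : l * ε ≤ α) (hα : α < 1) (h4 : σ ^ 2 ≤ a 4) (hZ : 1 ≤ ∑' k, l ^ k / k ! * a k) :
    |(∑' k, l ^ k / k ! * a (k + 1)) / (∑' k, l ^ k / k ! * a k) - l * σ| ≤
      driftConst α * l ^ 2 * ε * σ := by
  have hσ := h.nonneg hε
  have hK : 0 < (1 - α)⁻¹ := inv_pos.mpr (by linarith)
  have hσσ : σ * σ ≤ 12 * ε ^ 2 * σ := by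
    have h4' := (le_abs_self _).trans (h.bernstein 4 (by norm_num))
    norm_num [Nat.factorial] at h4'
    nlinarith
  have hcross : l * σ * (l ^ 2 * σ / 2 * (1 - α)⁻¹) ≤ 6 * (1 - α)⁻¹ * (l ^ 2 * ε * σ) := by
    calc l * σ * (l ^ 2 * σ / 2 * (1 - α)⁻¹) = l ^ 3 * (1 - α)⁻¹ / 2 * (σ * σ) := by ring
      _ ≤ l ^ 3 * (1 - α)⁻¹ / 2 * (12 * ε ^ 2 * σ) := by gcongr
      _ = (l * ε) * (6 * (1 - α)⁻¹ * (l ^ 2 * ε * σ)) := by ring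
      _ ≤ 1 * (6 * (1 - α)⁻¹ * (l ^ 2 * ε * σ)) := by gcongr; linarith
      _ = 6 * (1 - α)⁻¹ * (l ^ 2 * ε * σ) := one_mul _
  calc _ ≤ |∑' k, l ^ k / k ! * a (k + 1) - l * σ| + |l * σ| * |∑' k, l ^ k / k ! * a k - 1| :=
        abs_div_sub_le_of_one_le hZ
    _ ≤ l ^ 2 * ε * σ / 2 * (α / (1 - α) ^ 2 + 3 / (1 - α)) +
          l * σ * (l ^ 2 * σ / 2 * (1 - α)⁻¹) := by
        rw [abs_of_nonneg (mul_nonneg hl hσ)]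
        exact add_le_add (h.abs_tsum_succ_sub_le hε hl hlε hα)
          (mul_le_mul_of_nonneg_left (h.abs_tsum_sub_one_le hε hl hlε hα) (mul_nonneg hl hσ))
    _ ≤ driftConst α * l ^ 2 * ε * σ := by
        rw [driftConst, div_eq_mul_inv 6]
        linarith

end BernsteinMoments

section CondExp

variable {Ω : Type*} {m m0 : MeasurableSpace Ω} {μ : Measure Ω}

lemma sq_condExp_le_condExp_sq (hm : m ≤ m0) [IsFiniteMeasure μ] {X : Ω → ℝ} (hX : MemLp X 2 μ) :
    ∀ᵐ ω ∂μ, (μ[X|m] ω) ^ 2 ≤ μ[X ^ 2|m] ω := by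
  have hvar : 0 ≤ᵐ[μ] Var[X; μ | m] := condExp_nonneg (ae_of_all _ fun ω => sq_nonneg _)
  filter_upwards [condVar_ae_eq_condExp_sq_sub_sq_condExp hm hX, hvar] with ω hω hω0
  simp only [hω, Pi.sub_apply, Pi.pow_apply, Pi.zero_apply] at hω0
  linarith

lemma one_le_condExp_exp (hm : m ≤ m0) [IsFiniteMeasure μ] {X : Ω → ℝ} (hX : Integrable X μ)
    (hX0 : μ[X|m] =ᵐ[μ] 0) (hexp : Integrable (fun ω => Real.exp (X ω)) μ) :
    ∀ᵐ ω ∂μ, 1 ≤ μ[fun ω => Real.exp (X ω)|m] ω := by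
  have hmono := condExp_mono (m := m) ((integrable_const 1).add hX) hexp
    (ae_of_all _ fun ω => by simpa [add_comm] using Real.add_one_le_exp (X ω))
  filter_upwards [hmono, condExp_add (m := m) (integrable_const (1 : ℝ)) hX, hX0]
    with ω hω hadd h0
  rw [condExp_const hm] at hadd
  simpa [hadd, h0] using hω

lemma condExp_pow_mul_exp_ae_eq_tsum {ξ : Ω → ℝ} {l : ℝ} (j : ℕ)
    (hint : ∀ k, Integrable (fun ω => ξ ω ^ k) μ)
    (hsum : Summable fun k => |l| ^ k / k ! * ∫ ω, |ξ ω| ^ (k + j) ∂μ) :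
    μ[fun ω => ξ ω ^ j * Real.exp (l * ξ ω)|m] =ᵐ[μ]
      fun ω => ∑' k, l ^ k / k ! * μ[fun ω => ξ ω ^ (k + j)|m] ω := by
  set f : ℕ → Ω → ℝ := fun k ω => l ^ k / k ! * ξ ω ^ (k + j)
  have hf : ∀ k, Integrable (f k) μ := fun k => (hint (k + j)).const_mul _
  have hseries : (fun ω => ξ ω ^ j * Real.exp (l * ξ ω)) = fun ω => ∑' k, f k ω := by
    ext ω
    rw [Real.exp_eq_exp_ℝ, ← (NormedSpace.expSeries_div_hasSum_exp (l * ξ ω)).tsum_eq,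
      ← tsum_mul_left]
    congr 1 with k
    simp only [f, mul_pow, pow_add]
    ring
  have hnorm : ∀ k, ∫⁻ ω, ‖f k ω‖ₑ ∂μ =
      ENNReal.ofReal (|l| ^ k / k ! * ∫ ω, |ξ ω| ^ (k + j) ∂μ) := by
    intro k
    rw [← ofReal_integral_norm_eq_lintegral_enorm (hf k), ← integral_const_mul]
    congr 2 with ω
    simp [f]
  have hfin : ∑' k, ∫⁻ ω, ‖f k ω‖ₑ ∂μ ≠ ∞ := by
    simp_rw [hnorm]
    rw [← ENNReal.ofReal_tsum_of_nonneg (fun k => by positivity) hsum]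
    exact ENNReal.ofReal_ne_top
  rw [hseries]
  filter_upwards [condExp_tsum (m := m) (fun k => (hf k).aestronglyMeasurable) hfin,
    ae_all_iff.2 fun k => condExp_smul (l ^ k / k ! : ℝ) (fun ω => ξ ω ^ (k + j)) m] with ω h hk
  rw [h]
  exact tsum_congr fun k => hk k

lemma integral_pow_two_mul_le [IsProbabilityMeasure μ] (hm : m ≤ m0) {ξ : Ω → ℝ} {ε : ℝ}
    (hε : 0 < ε) (hbern : ∀ k, 3 ≤ k → ∀ᵐ ω ∂μ,
      |μ[fun ω => ξ ω ^ k|m] ω| ≤ 1 / 2 * k ! * ε ^ (k - 2) * μ[fun ω => ξ ω ^ 2|m] ω)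
    (i : ℕ) :
    ∫ ω, ξ ω ^ (2 * i) ∂μ ≤ (1 + (∫ ω, ξ ω ^ 2 ∂μ) / ε ^ 2) * (2 * i)! * ε ^ (2 * i) := by
  set M := ∫ ω, ξ ω ^ 2 ∂μ
  have hM : 0 ≤ M := integral_nonneg fun ω => sq_nonneg _
  have hε2 : 0 < ε ^ 2 := by positivity
  rcases i with _ | _ | i
  · simp only [mul_zero, pow_zero, integral_const, probReal_univ, smul_eq_mul, Nat.factorial_zero]
    norm_num
    positivity
  · simp only [zero_add, mul_one, Nat.factorial_two, Nat.cast_ofNat]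
    have : (1 + M / ε ^ 2) * 2 * ε ^ 2 = 2 * ε ^ 2 + 2 * M := by field_simp
    rw [this]
    linarith
  · have hk : 3 ≤ 2 * (i + 2) := by omega
    calc ∫ ω, ξ ω ^ (2 * (i + 2)) ∂μ = ∫ ω, μ[fun ω => ξ ω ^ (2 * (i + 2))|m] ω ∂μ :=
          (integral_condExp hm).symm
      _ ≤ ∫ ω, 1 / 2 * (2 * (i + 2))! * ε ^ (2 * (i + 2) - 2) * μ[fun ω => ξ ω ^ 2|m] ω ∂μ :=
          integral_mono_ae integrable_condExp (integrable_condExp.const_mul _)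
            ((hbern _ hk).mono fun ω hω => (le_abs_self _).trans hω)
      _ = 1 / 2 * (2 * (i + 2))! * ε ^ (2 * (i + 2) - 2) * M := by
          rw [integral_const_mul, integral_condExp hm]
      _ ≤ (1 + M / ε ^ 2) * (2 * (i + 2))! * ε ^ (2 * (i + 2)) := by
          rw [show 2 * (i + 2) = 2 * (i + 2) - 2 + 2 by omega, pow_add, Nat.add_sub_cancel]
          field_simp
          nlinarith [show (0 : ℝ) ≤ (2 * (i + 2) - 2 + 2)! * ε ^ (2 * (i + 2) - 2) * ε ^ 2 by
            positivity]

lemma integral_abs_pow_le {ξ : Ω → ℝ} {A ε : ℝ} (hε : 0 < ε) (hε1 : ε ≤ 1)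
    (hint : ∀ k, Integrable (fun ω => ξ ω ^ k) μ)
    (heven : ∀ i, ∫ ω, ξ ω ^ (2 * i) ∂μ ≤ A * (2 * i)! * ε ^ (2 * i)) (n : ℕ) :
    ∫ ω, |ξ ω| ^ n ∂μ ≤ A / ε * (n + 1)! * ε ^ n := by
  have hA : 0 ≤ A := by simpa using measureReal_nonneg.trans (by simpa using heven 0)
  obtain ⟨i, rfl | rfl⟩ := Nat.even_or_odd' n
  · simp_rw [Even.pow_abs (even_two_mul i)]
    refine (heven i).trans ?_
    gcongr
    · exact le_div_self hA hε hε1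
    · omega
  · calc ∫ ω, |ξ ω| ^ (2 * i + 1) ∂μ
        ≤ ∫ ω, (ξ ω ^ (2 * i) + ξ ω ^ (2 * (i + 1))) / 2 ∂μ :=
          integral_mono ((hint (2 * i + 1)).abs.congr (ae_of_all _ fun ω => by simp [abs_pow]))
            (((hint _).add (hint _)).div_const 2) fun ω => abs_pow_two_mul_add_one_le (ξ ω) i
      _ = ((∫ ω, ξ ω ^ (2 * i) ∂μ) + ∫ ω, ξ ω ^ (2 * (i + 1)) ∂μ) / 2 := by
          rw [integral_div, integral_add (hint _) (hint _)]
      _ ≤ (A * (2 * i)! * ε ^ (2 * i) + A * (2 * (i + 1))! * ε ^ (2 * (i + 1))) / 2 := by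
          gcongr <;> apply heven
      _ ≤ A / ε * (2 * i + 1 + 1)! * ε ^ (2 * i + 1) := by
          have hfac : ((2 * i)! : ℝ) ≤ (2 * (i + 1))! := by gcongr; omega
          have hpow : ε ^ (2 * (i + 1)) ≤ ε ^ (2 * i) := pow_le_pow_of_le_one hε.le hε1 (by omega)
          calc _ ≤ (A * (2 * (i + 1))! * ε ^ (2 * i) + A * (2 * (i + 1))! * ε ^ (2 * i)) / 2 := by
                gcongr
            _ = A / ε * (2 * i + 1 + 1)! * ε ^ (2 * i + 1) := by
                rw [pow_succ, show 2 * i + 1 + 1 = 2 * (i + 1) by ring]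
                field_simp
                ring

lemma ae_bernsteinMoments_condExp_pow [IsFiniteMeasure μ] (hm : m ≤ m0) {ξ : Ω → ℝ} {ε : ℝ}
    (hmart : μ[ξ|m] =ᵐ[μ] 0)
    (hbern : ∀ k, 3 ≤ k → ∀ᵐ ω ∂μ,
      |μ[fun ω => ξ ω ^ k|m] ω| ≤ 1 / 2 * k ! * ε ^ (k - 2) * μ[fun ω => ξ ω ^ 2|m] ω) :
    ∀ᵐ ω ∂μ, BernsteinMoments (fun k => μ[fun ω => ξ ω ^ k|m] ω) ε (μ[fun ω => ξ ω ^ 2|m] ω) := by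
  have h0 : μ[fun ω => ξ ω ^ 0|m] = fun _ => 1 := by simpa using condExp_const hm (1 : ℝ)
  have h1 : μ[fun ω => ξ ω ^ 1|m] =ᵐ[μ] 0 := by simpa using hmart
  filter_upwards [h1, ae_all_iff.2 fun k => eventually_imp_distrib_left.2 (hbern k)]
    with ω h1ω hbω
  exact ⟨congrFun h0 ω, h1ω, rfl, hbω⟩

lemma ae_abs_condExp_mul_exp_div_sub_le [IsProbabilityMeasure μ] (hm : m ≤ m0) {ξ : Ω → ℝ}
    {ε l α : ℝ} (hε : 0 < ε) (hε1 : ε ≤ 1) (hl : 0 ≤ l) (hlε : l * ε ≤ α) (hα : α < 1)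
    (hint : ∀ k, Integrable (fun ω => ξ ω ^ k) μ) (hmart : μ[ξ|m] =ᵐ[μ] 0)
    (hbern : ∀ k, 3 ≤ k → ∀ᵐ ω ∂μ,
      |μ[fun ω => ξ ω ^ k|m] ω| ≤ 1 / 2 * k ! * ε ^ (k - 2) * μ[fun ω => ξ ω ^ 2|m] ω)
    (hexp : Integrable (fun ω => Real.exp (l * ξ ω)) μ) :
    ∀ᵐ ω ∂μ, |μ[fun ω => ξ ω * Real.exp (l * ξ ω)|m] ω / μ[fun ω => Real.exp (l * ξ ω)|m] ω -
        l * μ[fun ω => ξ ω ^ 2|m] ω| ≤ driftConst α * l ^ 2 * ε * μ[fun ω => ξ ω ^ 2|m] ω := by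
  have hjensen : ∀ᵐ ω ∂μ, (μ[fun ω => ξ ω ^ 2|m] ω) ^ 2 ≤ μ[fun ω => ξ ω ^ 4|m] ω := by
    have hL2 : MemLp (fun ω => ξ ω ^ 2) 2 μ :=
      (memLp_two_iff_integrable_sq (hint 2).aestronglyMeasurable).2
        (by simpa [← pow_mul] using hint 4)
    simpa [Pi.pow_def, ← pow_mul] using sq_condExp_le_condExp_sq hm hL2
  have hZ1 : ∀ᵐ ω ∂μ, 1 ≤ μ[fun ω => Real.exp (l * ξ ω)|m] ω := by
    have hlξ : μ[fun ω => l * ξ ω|m] =ᵐ[μ] 0 := by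
      filter_upwards [condExp_smul l ξ m, hmart] with ω h h0
      change μ[l • ξ|m] ω = 0
      simp [h, h0]
    exact one_le_condExp_exp hm ((by simpa using hint 1 : Integrable ξ μ).const_mul l) hlξ hexp
  have hsum : ∀ j, Summable fun k => |l| ^ k / k ! * ∫ ω, |ξ ω| ^ (k + j) ∂μ := fun j =>
    summable_pow_div_factorial_mul_of_le (b := fun n => ∫ ω, |ξ ω| ^ n ∂μ) j
      (fun n => integral_nonneg fun ω => by positivity)
      (integral_abs_pow_le hε hε1 hint (integral_pow_two_mul_le hm hε hbern)) hε.le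
      (abs_nonneg l) (by rw [abs_of_nonneg hl]; linarith)
  have hZ := condExp_pow_mul_exp_ae_eq_tsum (m := m) 0 hint (hsum 0)
  have hY := condExp_pow_mul_exp_ae_eq_tsum (m := m) 1 hint (hsum 1)
  simp only [pow_zero, one_mul, pow_one, add_zero] at hZ hY
  filter_upwards [ae_bernsteinMoments_condExp_pow hm hmart hbern, hjensen, hZ1, hZ, hY]
    with ω hmω hjω hZ1ω hZω hYω
  rw [hZω] at hZ1ω ⊢
  rw [hYω]
  exact hmω.abs_tsum_div_tsum_sub_le hε hl hlε hα hjω hZ1ω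

end CondExp

theorem drift_process_expansion (α : ℝ) (hα : α ∈ Set.Ioo (0 : ℝ) 1) :
    ∃ c > 0, ∀ (Ω : Type) (m0 : MeasurableSpace Ω) (μ : Measure Ω),
      IsProbabilityMeasure μ →
      ∀ (n : ℕ) (ξ : ℕ → Ω → ℝ) (𝓕 : ℕ → MeasurableSpace Ω) (ε δ : ℝ),
      (∀ i, 𝓕 i ≤ m0) →
      ε ∈ Set.Ioc (0 : ℝ) (1 / 2) → δ ∈ Set.Icc (0 : ℝ) (1 / 2) →
      (∀ i ∈ Finset.Icc 1 n, ∀ k : ℕ, Integrable (fun ω => ξ i ω ^ k) μ) →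
      (∀ i ∈ Finset.Icc 1 n, μ[ξ i|𝓕 (i - 1)] =ᵐ[μ] 0) →
      (∀ i ∈ Finset.Icc 1 n, ∀ k : ℕ, 3 ≤ k → ∀ᵐ ω ∂μ,
        |(μ[fun ω => ξ i ω ^ k|𝓕 (i - 1)]) ω| ≤
          (1 / 2) * (Nat.factorial k : ℝ) * ε ^ (k - 2) *
            (μ[fun ω => ξ i ω ^ 2|𝓕 (i - 1)]) ω) →
      (∀ᵐ ω ∂μ,
        |(∑ i ∈ Finset.Icc 1 n, (μ[fun ω => ξ i ω ^ 2|𝓕 (i - 1)]) ω) - 1| ≤ δ ^ 2) →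
      ∀ l : ℝ, 0 ≤ l → l ≤ α / ε →
      (∀ i ∈ Finset.Icc 1 n, Integrable (fun ω => Real.exp (l * ξ i ω)) μ) →
      (∀ i ∈ Finset.Icc 1 n, Integrable (fun ω => ξ i ω * Real.exp (l * ξ i ω)) μ) →
      ∀ᵐ ω ∂μ,
        |(∑ i ∈ Finset.Icc 1 n,
            (μ[fun ω => ξ i ω * Real.exp (l * ξ i ω)|𝓕 (i - 1)]) ω /
              (μ[fun ω => Real.exp (l * ξ i ω)|𝓕 (i - 1)]) ω) - l|
          ≤ l * δ ^ 2 + c * l ^ 2 * ε := by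
  obtain ⟨hα0, hα1⟩ := hα
  refine ⟨2 * driftConst α, by linarith [driftConst_pos hα0.le hα1], ?_⟩
  intro Ω m0 μ _ n ξ 𝓕 ε δ h𝓕 hε hδ hint hmart hbern hvar l hl hlε hexp _
  have hlεα : l * ε ≤ α := (le_div_iff₀ hε.1).mp hlε
  have hδ1 : δ ^ 2 ≤ 1 := by nlinarith [hδ.1, hδ.2]
  have hdrift : ∀ᵐ ω ∂μ, ∀ i ∈ Finset.Icc 1 n,
      |(μ[fun ω => ξ i ω * Real.exp (l * ξ i ω)|𝓕 (i - 1)]) ω /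
          (μ[fun ω => Real.exp (l * ξ i ω)|𝓕 (i - 1)]) ω -
        l * (μ[fun ω => ξ i ω ^ 2|𝓕 (i - 1)]) ω| ≤
        driftConst α * l ^ 2 * ε * (μ[fun ω => ξ i ω ^ 2|𝓕 (i - 1)]) ω :=
    (eventually_all_finset _).2 fun i hi =>
      ae_abs_condExp_mul_exp_div_sub_le (h𝓕 _) hε.1 (by linarith [hε.2]) hl hlεα hα1
        (hint i hi) (hmart i hi) (hbern i hi) (hexp i hi)
  filter_upwards [hdrift, hvar] with ω hω hvarω
  refine (abs_sum_sub_le_of_abs_sub_le hl ?_ hω hvarω hδ1).trans_eq (by ring)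
  exact mul_nonneg (mul_nonneg (driftConst_pos hα0.le hα1).le (sq_nonneg l)) hε.1.le
end

section
/- Under conditions (A1) and (A2), the quadratic characteristic of the conjugate martingale satisfies |⟨Y⟩_n − 1| ≤ c(λε + δ²) almost surely for all 0 ≤ λ ≤ (1/4) ε^{−1}, where c is an absolute constant and ⟨Y⟩_n = Σ_{k=1}^n Δ⟨Y⟩_k with Δ⟨Y⟩_k as defined via the Esscher transform. -/
open MeasureTheory Real
open scoped Nat

/-!
For one increment `ξ` with conditioning σ-algebra `F`, write `S = E[ξ²|F]`, `E = E[e^{lξ}|F]`,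
`A = E[ξ e^{lξ}|F]` and `B = E[ξ² e^{lξ}|F]`. The Bernstein condition at `k = 4` together with
`(ξ² - K)² ≥ 0` forces `S ≤ 12 ε²`. Expanding `ξ² e^{lξ}` in its exponential series, which may be
conditioned termwise because the unconditional absolute moments are summable, the conditional
Bernstein bounds give `|B - S| ≤ 16 lε S`. Elementary exponential inequalities and `E[ξ|F] = 0`
give `1 ≤ E ≤ 1 + l²(S + B)` and `0 ≤ A ≤ l(S + B)`, so the conjugate variance `B/E - (A/E)²`
differs from `S` by at most `142 lε S`. Summing over the increments and using (A2) gives the bound.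
-/

lemma exp_sub_one_le_mul_exp (t : ℝ) : exp t - 1 ≤ t * exp t := by
  have h := add_one_le_exp (-t)
  rw [exp_neg] at h
  have := mul_le_mul_of_nonneg_right h (exp_pos t).le
  rw [inv_mul_cancel₀ (exp_pos t).ne'] at this
  linarith

lemma mul_exp_mul_sub_one_nonneg {l : ℝ} (hl : 0 ≤ l) (x : ℝ) :
    0 ≤ x * (exp (l * x) - 1) := by
  rcases le_total 0 x with hx | hx
  · exact mul_nonneg hx (sub_nonneg.2 (one_le_exp (mul_nonneg hl hx)))
  · exact mul_nonneg_of_nonpos_of_nonpos hx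
      (sub_nonpos.2 (exp_le_one_iff.2 (mul_nonpos_of_nonneg_of_nonpos hl hx)))

lemma mul_exp_mul_sub_one_le {l : ℝ} (hl : 0 ≤ l) (x : ℝ) :
    x * (exp (l * x) - 1) ≤ l * (x ^ 2 * (1 + exp (l * x))) := by
  have hlx : 0 ≤ l * x ^ 2 := mul_nonneg hl (sq_nonneg x)
  rcases le_total 0 x with hx | hx
  · nlinarith [mul_le_mul_of_nonneg_left (exp_sub_one_le_mul_exp (l * x)) hx, exp_pos (l * x)]
  · nlinarith [mul_le_mul_of_nonpos_left (add_one_le_exp (l * x)) hx, exp_pos (l * x)]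

lemma exp_sub_one_sub_le (t : ℝ) : exp t - 1 - t ≤ t ^ 2 * (1 + exp t) := by
  have h := mul_exp_mul_sub_one_le zero_le_one t
  simp only [one_mul] at h
  linarith [exp_sub_one_le_mul_exp t]

lemma abs_pow_le_pow_add_pow (x : ℝ) {a b k : ℕ} (ha : Even a) (hb : Even b) (hak : a ≤ k)
    (hkb : k ≤ b) : |x| ^ k ≤ x ^ a + x ^ b := by
  rw [← ha.pow_abs, ← hb.pow_abs]
  rcases le_total |x| 1 with hx | hx
  · linarith [pow_le_pow_of_le_one (abs_nonneg x) hx hak, pow_nonneg (abs_nonneg x) b]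
  · linarith [pow_le_pow_right₀ hx hkb, pow_nonneg (abs_nonneg x) a]

lemma pow_div_factorial_mul_factorial_add_le {r : ℝ} (hr : 0 ≤ r) (m k : ℕ) :
    r ^ m / m ! * (m + k)! ≤ k ! * 2 ^ k * (2 * r) ^ m := by
  have hfac : ((m + k)! : ℝ) ≤ 2 ^ (m + k) * m ! * k ! := by
    rw [← Nat.add_choose_mul_factorial_mul_factorial]
    exact_mod_cast Nat.mul_le_mul_right _ (Nat.mul_le_mul_right _ (Nat.choose_le_two_pow _ _))
  have hm : (0 : ℝ) < m ! := by positivity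
  calc r ^ m / m ! * (m + k)! ≤ r ^ m / m ! * (2 ^ (m + k) * m ! * k !) := by gcongr
    _ = k ! * 2 ^ k * (2 * r) ^ m := by field_simp; ring

lemma abs_tsum_sub_le_of_abs_le_geometric {c : ℕ → ℝ} {s ρ : ℝ} (hρ0 : 0 ≤ ρ) (hρ : ρ ≤ 1 / 2)
    (hc : ∀ m, |c m| ≤ s * ρ ^ m) : |∑' m, c m - c 0| ≤ 2 * s * ρ := by
  have hgeom : HasSum (fun m => s * ρ ^ (m + 1)) (s * ρ * (1 - ρ)⁻¹) := by
    simpa [pow_succ, mul_assoc, mul_comm ρ] using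
      ((hasSum_geometric_of_lt_one hρ0 (by linarith)).mul_left (s * ρ))
  have hsum : Summable c :=
    .of_norm_bounded ((summable_geometric_of_lt_one hρ0 (by linarith)).mul_left s) hc
  have hs : 0 ≤ s := by simpa using (abs_nonneg _).trans (hc 0)
  rw [hsum.tsum_eq_zero_add, add_sub_cancel_left]
  calc |∑' m, c (m + 1)| ≤ s * ρ * (1 - ρ)⁻¹ :=
        tsum_of_norm_bounded (f := fun m => c (m + 1)) hgeom fun m => hc (m + 1)
    _ ≤ 2 * s * ρ := by
        rw [← div_eq_mul_inv, div_le_iff₀ (by linarith)]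
        nlinarith [mul_nonneg hs hρ0]

lemma abs_div_sub_div_sq_sub_le {l ε S E A B : ℝ} (hl : 0 ≤ l) (hε : 0 ≤ ε)
    (hlε : l * ε ≤ 1 / 4) (hS0 : 0 ≤ S) (hS : S ≤ 12 * ε ^ 2) (hB : |B - S| ≤ 16 * (l * ε) * S)
    (hE1 : 1 ≤ E) (hE : E ≤ 1 + l ^ 2 * (S + B)) (hA0 : 0 ≤ A) (hA : A ≤ l * (S + B)) :
    |B / E - (A / E) ^ 2 - S| ≤ 142 * (l * ε) * S := by
  set r := l * ε
  have hr : 0 ≤ r := mul_nonneg hl hε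
  have hSB : S + B ≤ 6 * S := by nlinarith [le_abs_self (B - S)]
  have hl2S : l ^ 2 * S ≤ 12 * r ^ 2 := by
    calc l ^ 2 * S ≤ l ^ 2 * (12 * ε ^ 2) := by gcongr
      _ = 12 * r ^ 2 := by ring
  have hSE : S * (E - 1) ≤ 18 * r * S := by
    calc S * (E - 1) ≤ S * (6 * (l ^ 2 * S)) := by gcongr; nlinarith
      _ ≤ S * (72 * r ^ 2) := mul_le_mul_of_nonneg_left (by linarith) hS0
      _ ≤ 18 * r * S := by nlinarith [mul_nonneg (mul_nonneg hr hS0) (by linarith : 0 ≤ 1 / 4 - r)]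
  have hvar : |B / E - S| ≤ 34 * r * S := by
    have hE0 : 0 < E := by linarith
    calc |B / E - S| = |(B - S) - S * (E - 1)| / E := by
          rw [← abs_of_pos hE0, ← abs_div, abs_of_pos hE0]; congr 1; field_simp; ring
      _ ≤ |(B - S) - S * (E - 1)| := div_le_self (abs_nonneg _) hE1
      _ ≤ |B - S| + S * (E - 1) := by
          have := abs_sub (B - S) (S * (E - 1))
          rwa [abs_of_nonneg (by nlinarith : 0 ≤ S * (E - 1))] at this
      _ ≤ 34 * r * S := by linarith
  have htilt : (A / E) ^ 2 ≤ 108 * r * S := by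
    have hAE : A / E ≤ A := div_le_self hA0 hE1
    calc (A / E) ^ 2 ≤ (l * (6 * S)) ^ 2 :=
          pow_le_pow_left₀ (by positivity) (hAE.trans (hA.trans (by gcongr))) 2
      _ = 36 * (l ^ 2 * S) * S := by ring
      _ ≤ 36 * (12 * r ^ 2) * S := by gcongr
      _ ≤ 108 * r * S := by nlinarith [mul_nonneg hr hS0]
  calc |B / E - (A / E) ^ 2 - S| ≤ |B / E - S| + (A / E) ^ 2 := by
        rw [show B / E - (A / E) ^ 2 - S = (B / E - S) - (A / E) ^ 2 by ring]
        have := abs_sub (B / E - S) ((A / E) ^ 2)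
        rwa [abs_of_nonneg (sq_nonneg (A / E))] at this
    _ ≤ 142 * r * S := by linarith

lemma abs_sum_sub_one_le {ι : Type*} (s : Finset ι) {T G : ι → ℝ} {a d : ℝ} (ha : 0 ≤ a)
    (hTG : ∀ i ∈ s, |T i - G i| ≤ a * G i) (hG : |∑ i ∈ s, G i - 1| ≤ d) :
    |∑ i ∈ s, T i - 1| ≤ a * (1 + d) + d := by
  have hsplit : ∑ i ∈ s, T i - 1 = ∑ i ∈ s, (T i - G i) + (∑ i ∈ s, G i - 1) := by
    rw [Finset.sum_sub_distrib]; ring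
  calc |∑ i ∈ s, T i - 1| ≤ ∑ i ∈ s, |T i - G i| + d := by
        rw [hsplit]
        exact (abs_add_le _ _).trans (add_le_add (Finset.abs_sum_le_sum_abs _ _) hG)
    _ ≤ a * ∑ i ∈ s, G i + d := by
        rw [Finset.mul_sum]; gcongr with i hi; exact hTG i hi
    _ ≤ a * (1 + d) + d := by gcongr; linarith [le_abs_self (∑ i ∈ s, G i - 1)]

variable {Ω : Type*} {m0 : MeasurableSpace Ω} {μ : Measure Ω} {F : MeasurableSpace Ω}
  {f g : Ω → ℝ}

lemma condExp_const_add_mul [IsFiniteMeasure μ] (hF : F ≤ m0) (a b : ℝ) (hf : Integrable f μ) :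
    μ[fun ω => a + b * f ω|F] =ᵐ[μ] fun ω => a + b * μ[f|F] ω := by
  have hsplit : (fun ω => a + b * f ω) = (fun _ => a) + b • f := rfl
  rw [hsplit]
  filter_upwards [condExp_add (integrable_const a) (hf.smul b) F, condExp_smul b f F]
    with ω hadd hsmul
  simp [hadd, hsmul, condExp_const hF]

lemma condExp_const_add_mul_add_mul [IsFiniteMeasure μ] (hF : F ≤ m0) (a b c : ℝ)
    (hf : Integrable f μ) (hg : Integrable g μ) :
    μ[fun ω => a + b * f ω + c * g ω|F] =ᵐ[μ]
      fun ω => a + b * μ[f|F] ω + c * μ[g|F] ω := by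
  have hsplit : (fun ω => a + b * f ω + c * g ω) = (fun ω => a + b * f ω) + c • g := rfl
  rw [hsplit]
  filter_upwards [condExp_add (f := fun ω => a + b * f ω)
      ((integrable_const a).add (hf.const_mul b)) (hg.smul c) F,
    condExp_const_add_mul hF a b hf, condExp_smul c g F] with ω hadd haff hsmul
  simp [hadd, haff, hsmul]

lemma condExp_sq_le_of_condExp_pow_four_le [IsFiniteMeasure μ] (hF : F ≤ m0) {ξ : Ω → ℝ}
    {K : ℝ} (hK : 0 < K) (h2 : Integrable (fun ω => ξ ω ^ 2) μ)
    (h4 : Integrable (fun ω => ξ ω ^ 4) μ)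
    (h : ∀ᵐ ω ∂μ, μ[fun ω => ξ ω ^ 4|F] ω ≤ K * μ[fun ω => ξ ω ^ 2|F] ω) :
    ∀ᵐ ω ∂μ, μ[fun ω => ξ ω ^ 2|F] ω ≤ K := by
  have hsq : μ[fun ω => -K ^ 2 + 2 * K * ξ ω ^ 2|F] ≤ᵐ[μ] μ[fun ω => ξ ω ^ 4|F] :=
    condExp_mono ((integrable_const _).add (h2.const_mul _)) h4
      (ae_of_all _ fun ω => by nlinarith [sq_nonneg (ξ ω ^ 2 - K)])
  filter_upwards [hsq, condExp_const_add_mul hF (-K ^ 2) (2 * K) h2, h] with ω hsq hlin h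
  rw [hlin] at hsq
  nlinarith

lemma condExp_tsum_of_summable_integral_norm {u : ℕ → Ω → ℝ} (hu : ∀ i, Integrable (u i) μ)
    (hsum : Summable fun i => ∫ ω, ‖u i ω‖ ∂μ) :
    μ[fun ω => ∑' i, u i ω|F] =ᵐ[μ] fun ω => ∑' i, μ[u i|F] ω := by
  refine condExp_tsum (fun i => (hu i).1) ?_
  have hterm (i : ℕ) : ∫⁻ ω, ‖u i ω‖ₑ ∂μ = ENNReal.ofReal (∫ ω, ‖u i ω‖ ∂μ) :=
    (ofReal_integral_norm_eq_lintegral_enorm (hu i)).symm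
  rw [tsum_congr hterm, ← ENNReal.ofReal_tsum_of_nonneg (f := fun i => ∫ ω, ‖u i ω‖ ∂μ)
    (fun i => integral_nonneg fun ω => norm_nonneg _) hsum]
  exact ENNReal.ofReal_ne_top

lemma condExp_pow_mul_exp_eq_tsum {ξ : Ω → ℝ} (l : ℝ) (j : ℕ)
    (hint : ∀ k : ℕ, Integrable (fun ω => ξ ω ^ k) μ)
    (hsum : Summable fun m : ℕ => ∫ ω, ‖l ^ m / m ! * ξ ω ^ (m + j)‖ ∂μ) :
    μ[fun ω => ξ ω ^ j * exp (l * ξ ω)|F] =ᵐ[μ]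
      fun ω => ∑' m : ℕ, l ^ m / m ! * μ[fun ω => ξ ω ^ (m + j)|F] ω := by
  have hexp : (fun ω => ξ ω ^ j * exp (l * ξ ω)) =
      fun ω => ∑' m : ℕ, l ^ m / m ! * ξ ω ^ (m + j) := by
    ext ω
    rw [exp_eq_exp_ℝ, NormedSpace.exp_eq_tsum_div, ← tsum_mul_left]
    congr 1 with m
    ring
  have hterm : ∀ᵐ ω ∂μ, ∀ m : ℕ, μ[fun ω => l ^ m / m ! * ξ ω ^ (m + j)|F] ω =
      l ^ m / m ! * μ[fun ω => ξ ω ^ (m + j)|F] ω :=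
    ae_all_iff.2 fun m => condExp_smul (l ^ m / m !) (fun ω => ξ ω ^ (m + j)) F
  rw [hexp]
  filter_upwards [condExp_tsum_of_summable_integral_norm (fun m => (hint (m + j)).const_mul _)
    hsum, hterm] with ω hseries hterm
  rw [hseries, tsum_congr hterm]

/-- The conditional Bernstein condition (A1) on an increment `ξ` given `F`. -/
def CondBernstein (μ : Measure Ω) (F : MeasurableSpace Ω) (ξ : Ω → ℝ) (ε : ℝ) : Prop :=
  ∀ k : ℕ, 3 ≤ k → ∀ᵐ ω ∂μ, |(μ[fun ω => ξ ω ^ k|F]) ω| ≤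
    (1 / 2) * (Nat.factorial k : ℝ) * ε ^ (k - 2) * (μ[fun ω => ξ ω ^ 2|F]) ω

namespace CondBernstein

variable {ξ : Ω → ℝ} {ε l : ℝ}

lemma abs_condExp_pow_le (h : CondBernstein μ F ξ ε) {k : ℕ} (hk : 2 ≤ k) :
    ∀ᵐ ω ∂μ, |μ[fun ω => ξ ω ^ k|F] ω| ≤
      1 / 2 * k ! * ε ^ (k - 2) * μ[fun ω => ξ ω ^ 2|F] ω := by
  rcases hk.eq_or_lt with rfl | hk
  · filter_upwards [condExp_nonneg (μ := μ) (m := F) (ae_of_all _ fun ω => sq_nonneg (ξ ω))]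
      with ω hS
    simp [abs_of_nonneg hS]
  · exact h k hk

lemma condExp_sq_le [IsFiniteMeasure μ] (h : CondBernstein μ F ξ ε) (hF : F ≤ m0) (hε : 0 < ε)
    (h2 : Integrable (fun ω => ξ ω ^ 2) μ) (h4 : Integrable (fun ω => ξ ω ^ 4) μ) :
    ∀ᵐ ω ∂μ, μ[fun ω => ξ ω ^ 2|F] ω ≤ 12 * ε ^ 2 := by
  refine condExp_sq_le_of_condExp_pow_four_le hF (by positivity) h2 h4 ?_
  filter_upwards [h 4 (by norm_num)] with ω h4
  norm_num [Nat.factorial] at h4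
  linarith [le_abs_self (μ[fun ω => ξ ω ^ 4|F] ω)]

lemma integral_pow_le [IsProbabilityMeasure μ] (h : CondBernstein μ F ξ ε) (hF : F ≤ m0)
    (hε : 0 < ε) (h2 : Integrable (fun ω => ξ ω ^ 2) μ) (h4 : Integrable (fun ω => ξ ω ^ 4) μ)
    {k : ℕ} (hk : 2 ≤ k) : ∫ ω, ξ ω ^ k ∂μ ≤ 6 * k ! * ε ^ k := by
  have hle : ∀ᵐ ω ∂μ, μ[fun ω => ξ ω ^ k|F] ω ≤ 6 * k ! * ε ^ k := by
    filter_upwards [h.abs_condExp_pow_le hk, h.condExp_sq_le hF hε h2 h4] with ω hB hS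
    calc μ[fun ω => ξ ω ^ k|F] ω ≤ 1 / 2 * k ! * ε ^ (k - 2) * μ[fun ω => ξ ω ^ 2|F] ω :=
          (le_abs_self _).trans hB
      _ ≤ 1 / 2 * k ! * ε ^ (k - 2) * (12 * ε ^ 2) := by gcongr
      _ = 6 * k ! * (ε ^ (k - 2) * ε ^ 2) := by ring
      _ = 6 * k ! * ε ^ k := by rw [pow_sub_mul_pow _ hk]
  rw [← integral_condExp hF]
  simpa using integral_mono_ae integrable_condExp (integrable_const _) hle

lemma integral_abs_pow_le [IsProbabilityMeasure μ] (h : CondBernstein μ F ξ ε) (hF : F ≤ m0)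
    (hε0 : 0 < ε) (hε1 : ε ≤ 1) (hint : ∀ k : ℕ, Integrable (fun ω => ξ ω ^ k) μ) {k : ℕ}
    (hk : 2 ≤ k) : ∫ ω, |ξ ω| ^ k ∂μ ≤ 12 * (k + 1)! * ε ^ (k - 1) := by
  -- bracket `k` between the even exponents `a ≤ k ≤ b`, both within one of `k`
  set a := 2 * (k / 2)
  set b := 2 * ((k + 1) / 2)
  have hmom {j : ℕ} (hj : 2 ≤ j) (hjk : k - 1 ≤ j) (hjk' : j ≤ k + 1) :
      ∫ ω, ξ ω ^ j ∂μ ≤ 6 * (k + 1)! * ε ^ (k - 1) :=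
    (h.integral_pow_le hF hε0 (hint 2) (hint 4) hj).trans <| by
      gcongr 6 * ?_ * ?_
      · exact_mod_cast Nat.factorial_le hjk'
      · exact pow_le_pow_of_le_one hε0.le hε1 hjk
  calc ∫ ω, |ξ ω| ^ k ∂μ ≤ ∫ ω, (ξ ω ^ a + ξ ω ^ b) ∂μ :=
        integral_mono (by simpa [abs_pow] using (hint k).abs) ((hint _).add (hint _))
          fun ω => abs_pow_le_pow_add_pow (ξ ω) (even_two_mul _) (even_two_mul _)
            (by omega) (by omega)
    _ ≤ 12 * (k + 1)! * ε ^ (k - 1) := by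
        rw [integral_add (hint _) (hint _)]
        linarith [hmom (j := a) (by omega) (by omega) (by omega),
          hmom (j := b) (by omega) (by omega) (by omega)]

lemma summable_integral_norm_exp_series [IsProbabilityMeasure μ] (h : CondBernstein μ F ξ ε)
    (hF : F ≤ m0) (hε0 : 0 < ε) (hε1 : ε ≤ 1) (hint : ∀ k : ℕ, Integrable (fun ω => ξ ω ^ k) μ)
    (hl : 0 ≤ l) (hlε : l * ε ≤ 1 / 4) :
    Summable fun m : ℕ => ∫ ω, ‖l ^ m / m ! * ξ ω ^ (m + 2)‖ ∂μ := by
  refine .of_nonneg_of_le (fun m => integral_nonneg fun _ => norm_nonneg _) (fun m => ?_)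
    ((summable_geometric_of_lt_one (by positivity) (by linarith : 2 * (l * ε) < 1)).mul_left
      (576 * ε))
  have hnorm : ∫ ω, ‖l ^ m / m ! * ξ ω ^ (m + 2)‖ ∂μ = l ^ m / m ! * ∫ ω, |ξ ω| ^ (m + 2) ∂μ := by
    simp_rw [norm_mul, norm_pow, Real.norm_eq_abs, abs_of_nonneg (by positivity : 0 ≤ l ^ m / m !)]
    exact integral_const_mul _ _
  calc ∫ ω, ‖l ^ m / m ! * ξ ω ^ (m + 2)‖ ∂μ
      ≤ l ^ m / m ! * (12 * (m + 3)! * ε ^ (m + 1)) := by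
        rw [hnorm]
        gcongr
        exact h.integral_abs_pow_le hF hε0 hε1 hint (by omega)
    _ = 12 * ε * ((l * ε) ^ m / m ! * (m + 3)!) := by rw [mul_pow]; ring
    _ ≤ 12 * ε * (3 ! * 2 ^ 3 * (2 * (l * ε)) ^ m) := by
        exact mul_le_mul_of_nonneg_left
          (pow_div_factorial_mul_factorial_add_le (by positivity) m 3) (by positivity)
    _ = 576 * ε * (2 * (l * ε)) ^ m := by norm_num [Nat.factorial]; ring

lemma abs_condExp_sq_mul_exp_sub_le [IsProbabilityMeasure μ] (h : CondBernstein μ F ξ ε)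
    (hF : F ≤ m0) (hε0 : 0 < ε) (hε1 : ε ≤ 1) (hint : ∀ k : ℕ, Integrable (fun ω => ξ ω ^ k) μ)
    (hl : 0 ≤ l) (hlε : l * ε ≤ 1 / 4) :
    ∀ᵐ ω ∂μ, |μ[fun ω => ξ ω ^ 2 * exp (l * ξ ω)|F] ω - μ[fun ω => ξ ω ^ 2|F] ω| ≤
      16 * (l * ε) * μ[fun ω => ξ ω ^ 2|F] ω := by
  have hmom : ∀ᵐ ω ∂μ, ∀ m : ℕ, |μ[fun ω => ξ ω ^ (m + 2)|F] ω| ≤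
      1 / 2 * (m + 2)! * ε ^ m * μ[fun ω => ξ ω ^ 2|F] ω :=
    ae_all_iff.2 fun m => by simpa using h.abs_condExp_pow_le (k := m + 2) (by omega)
  filter_upwards [condExp_pow_mul_exp_eq_tsum l 2 hint
      (h.summable_integral_norm_exp_series hF hε0 hε1 hint hl hlε), hmom,
      condExp_nonneg (μ := μ) (m := F) (ae_of_all _ fun ω => sq_nonneg (ξ ω))]
    with ω hseries hmom hS
  rw [hseries]
  have hc : ∀ m : ℕ, |l ^ m / m ! * μ[fun ω => ξ ω ^ (m + 2)|F] ω| ≤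
      4 * μ[fun ω => ξ ω ^ 2|F] ω * (2 * (l * ε)) ^ m := by
    intro m
    rw [abs_mul, abs_of_nonneg (by positivity : 0 ≤ l ^ m / m !)]
    calc l ^ m / m ! * |μ[fun ω => ξ ω ^ (m + 2)|F] ω|
        ≤ l ^ m / m ! * (1 / 2 * (m + 2)! * ε ^ m * μ[fun ω => ξ ω ^ 2|F] ω) := by
          gcongr
          exact hmom m
      _ = 1 / 2 * μ[fun ω => ξ ω ^ 2|F] ω * ((l * ε) ^ m / m ! * (m + 2)!) := by
          rw [mul_pow]; ring
      _ ≤ 1 / 2 * μ[fun ω => ξ ω ^ 2|F] ω * (2 ! * 2 ^ 2 * (2 * (l * ε)) ^ m) := by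
          exact mul_le_mul_of_nonneg_left
            (pow_div_factorial_mul_factorial_add_le (by positivity) m 2) (by simpa using hS)
      _ = 4 * μ[fun ω => ξ ω ^ 2|F] ω * (2 * (l * ε)) ^ m := by norm_num [Nat.factorial]; ring
  have := abs_tsum_sub_le_of_abs_le_geometric (by positivity) (by linarith) hc
  simp only [pow_zero, Nat.factorial_zero, Nat.cast_one, div_one, one_mul, zero_add] at this
  linarith

lemma abs_tilted_variance_sub_le [IsProbabilityMeasure μ] (h : CondBernstein μ F ξ ε)
    (hF : F ≤ m0) (hmean : μ[ξ|F] =ᵐ[μ] 0) (hε0 : 0 < ε) (hε1 : ε ≤ 1) (hl : 0 ≤ l)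
    (hlε : l * ε ≤ 1 / 4) (hint : ∀ k : ℕ, Integrable (fun ω => ξ ω ^ k) μ)
    (hIe : Integrable (fun ω => exp (l * ξ ω)) μ)
    (hIa : Integrable (fun ω => ξ ω * exp (l * ξ ω)) μ)
    (hIb : Integrable (fun ω => ξ ω ^ 2 * exp (l * ξ ω)) μ) :
    ∀ᵐ ω ∂μ, |μ[fun ω => ξ ω ^ 2 * exp (l * ξ ω)|F] ω / μ[fun ω => exp (l * ξ ω)|F] ω -
        (μ[fun ω => ξ ω * exp (l * ξ ω)|F] ω / μ[fun ω => exp (l * ξ ω)|F] ω) ^ 2 -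
        μ[fun ω => ξ ω ^ 2|F] ω| ≤ 142 * (l * ε) * μ[fun ω => ξ ω ^ 2|F] ω := by
  have hξ : Integrable ξ μ := by simpa using hint 1
  set q : Ω → ℝ := (fun ω => ξ ω ^ 2) + fun ω => ξ ω ^ 2 * exp (l * ξ ω)
  have hq : Integrable q μ := (hint 2).add hIb
  have hE1 := condExp_mono (m := F) (f := fun ω => 1 + l * ξ ω)
    ((integrable_const 1).add (hξ.const_mul l)) hIe
    (ae_of_all _ fun ω => by linarith [add_one_le_exp (l * ξ ω)])
  have hA0 := condExp_mono (m := F) hξ hIa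
    (ae_of_all _ fun ω => by linarith [mul_exp_mul_sub_one_nonneg hl (ξ ω)])
  have hA := condExp_mono (m := F) (g := fun ω => 0 + 1 * ξ ω + l * q ω) hIa
    (((integrable_const 0).add (hξ.const_mul 1)).add (hq.const_mul l))
    (ae_of_all _ fun ω => by
      simp only [q, Pi.add_apply]
      linear_combination mul_exp_mul_sub_one_le hl (ξ ω))
  have hE := condExp_mono (m := F) (g := fun ω => 1 + l * ξ ω + l ^ 2 * q ω) hIe
    (((integrable_const 1).add (hξ.const_mul l)).add (hq.const_mul (l ^ 2)))
    (ae_of_all _ fun ω => by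
      simp only [q, Pi.add_apply]
      linear_combination exp_sub_one_sub_le (l * ξ ω))
  filter_upwards [hE1, hA0, hA, hE, condExp_const_add_mul hF 1 l hξ,
    condExp_const_add_mul_add_mul hF 0 1 l hξ hq,
    condExp_const_add_mul_add_mul hF 1 l (l ^ 2) hξ hq, condExp_add (hint 2) hIb F, hmean,
    condExp_nonneg (μ := μ) (m := F) (ae_of_all _ fun ω => sq_nonneg (ξ ω)),
    h.condExp_sq_le hF hε0 (hint 2) (hint 4),
    h.abs_condExp_sq_mul_exp_sub_le hF hε0 hε1 hint hl hlε]
    with ω hE1 hA0 hA hE hlin1 hlinA hlinE hqS hmean hS0 hS hB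
  simp only [Pi.zero_apply] at hmean hS0
  rw [hlin1, hmean] at hE1
  rw [hlinA, hmean, hqS, Pi.add_apply] at hA
  rw [hlinE, hmean, hqS, Pi.add_apply] at hE
  rw [hmean] at hA0
  exact abs_div_sub_div_sq_sub_le hl hε0.le hlε hS0 hS hB (by linarith) (by linarith) hA0
    (by linarith)

end CondBernstein

theorem conjugate_quadratic_characteristic_close_to_one :
    ∃ c > 0, ∀ (Ω : Type) (m0 : MeasurableSpace Ω) (μ : Measure Ω),
      IsProbabilityMeasure μ →
      ∀ (n : ℕ) (ξ : ℕ → Ω → ℝ) (𝓕 : ℕ → MeasurableSpace Ω) (ε δ : ℝ),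
      (∀ i, 𝓕 i ≤ m0) →
      ε ∈ Set.Ioc (0 : ℝ) (1 / 2) → δ ∈ Set.Icc (0 : ℝ) (1 / 2) →
      (∀ i ∈ Finset.Icc 1 n, ∀ k : ℕ, Integrable (fun ω => ξ i ω ^ k) μ) →
      (∀ i ∈ Finset.Icc 1 n, μ[ξ i|𝓕 (i - 1)] =ᵐ[μ] 0) →
      (∀ i ∈ Finset.Icc 1 n, ∀ k : ℕ, 3 ≤ k → ∀ᵐ ω ∂μ,
        |(μ[fun ω => ξ i ω ^ k|𝓕 (i - 1)]) ω| ≤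
          (1 / 2) * (Nat.factorial k : ℝ) * ε ^ (k - 2) *
            (μ[fun ω => ξ i ω ^ 2|𝓕 (i - 1)]) ω) →
      (∀ᵐ ω ∂μ,
        |(∑ i ∈ Finset.Icc 1 n, (μ[fun ω => ξ i ω ^ 2|𝓕 (i - 1)]) ω) - 1| ≤ δ ^ 2) →
      ∀ l : ℝ, 0 ≤ l → l ≤ (1 / 4) * ε⁻¹ →
      (∀ i ∈ Finset.Icc 1 n, Integrable (fun ω => Real.exp (l * ξ i ω)) μ) →
      (∀ i ∈ Finset.Icc 1 n, Integrable (fun ω => ξ i ω * Real.exp (l * ξ i ω)) μ) →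
      (∀ i ∈ Finset.Icc 1 n, Integrable (fun ω => ξ i ω ^ 2 * Real.exp (l * ξ i ω)) μ) →
      ∀ᵐ ω ∂μ,
        |(∑ k ∈ Finset.Icc 1 n,
            ((μ[fun ω => ξ k ω ^ 2 * Real.exp (l * ξ k ω)|𝓕 (k - 1)]) ω /
              (μ[fun ω => Real.exp (l * ξ k ω)|𝓕 (k - 1)]) ω -
            ((μ[fun ω => ξ k ω * Real.exp (l * ξ k ω)|𝓕 (k - 1)]) ω /
              (μ[fun ω => Real.exp (l * ξ k ω)|𝓕 (k - 1)]) ω) ^ 2)) - 1|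
        ≤ c * (l * ε + δ ^ 2) := by
  refine ⟨200, by norm_num, ?_⟩
  intro Ω m0 μ _ n ξ 𝓕 ε δ h𝓕 ⟨hε0, hε⟩ ⟨hδ0, hδ⟩ hint hmean hbern hvar l hl hlε' hIe hIa hIb
  have hlε : l * ε ≤ 1 / 4 := by
    calc l * ε ≤ 1 / 4 * ε⁻¹ * ε := by gcongr
      _ = 1 / 4 := by field_simp
  have hstep := (Filter.eventually_all_finset _).2 fun i hi =>
    CondBernstein.abs_tilted_variance_sub_le (hbern i hi) (h𝓕 (i - 1)) (hmean i hi) hε0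
      (by linarith) hl hlε (hint i hi) (hIe i hi) (hIa i hi) (hIb i hi)
  filter_upwards [hstep, hvar] with ω hstep hvar
  refine (abs_sum_sub_one_le _ (by positivity) hstep hvar).trans ?_
  nlinarith [mul_nonneg hl hε0.le, sq_nonneg δ]
end
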